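/- Let 0 < β < 1 and b locally integrable on ℝ^n. If b ∈ Λ_β(ℝ^n) and b ≥ 0, then there is a constant C such that for every ball B, |B|^{−β/n} ( |B|^{−1} ∫_B |b(x) − M_B(b)(x)| dx ) ≤ C ‖b‖_{Λ_β}, where M_B is the maximal operator relative to B. -/

import Mathlib

/-! Every average of `|b|` over a ball `B' ⊆ B` containing `x` lies within the oscillation of `|b|`
on `B` from `|b x|`, and small balls around `x` show that such averages exist; hence
`|(|b x|) - M_B b x|` is at most that oscillation, which for `b ∈ Λ_β` and `B` of radius `r` is at
most `‖b‖_{Λ_β} (2r)^β`. For `b ≥ 0` this bounds `|b - M_B b|` pointwise on `B`, and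
`|B|^{-β/n} (2r)^β` depends only on `n` and `β` by scaling. -/

open MeasureTheory Metric

noncomputable def fracMax (n : ℕ) (α : ℝ) (f : EuclideanSpace ℝ (Fin n) → ℝ)
    (x : EuclideanSpace ℝ (Fin n)) : ℝ :=
  sSup {t : ℝ | ∃ (c : EuclideanSpace ℝ (Fin n)) (r : ℝ), 0 < r ∧ x ∈ ball c r ∧
    t = (volume (ball c r)).toReal ^ (α / (n : ℝ) - 1) * ∫ y in ball c r, |f y|}

noncomputable def locFracMax (n : ℕ) (α : ℝ) (B : Set (EuclideanSpace ℝ (Fin n)))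
    (b : EuclideanSpace ℝ (Fin n) → ℝ) (x : EuclideanSpace ℝ (Fin n)) : ℝ :=
  sSup {t : ℝ | ∃ (c : EuclideanSpace ℝ (Fin n)) (r : ℝ), 0 < r ∧ x ∈ ball c r ∧ ball c r ⊆ B ∧
    t = (volume (ball c r)).toReal ^ (α / (n : ℝ) - 1) * ∫ y in ball c r, |b y|}

noncomputable def maxComm (n : ℕ) (α : ℝ) (b f : EuclideanSpace ℝ (Fin n) → ℝ)
    (x : EuclideanSpace ℝ (Fin n)) : ℝ :=
  sSup {t : ℝ | ∃ (c : EuclideanSpace ℝ (Fin n)) (r : ℝ), 0 < r ∧ x ∈ ball c r ∧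
    t = (volume (ball c r)).toReal ^ (α / (n : ℝ) - 1) * ∫ y in ball c r, |b x - b y| * |f y|}

noncomputable def lipSemi (n : ℕ) (β : ℝ) (b : EuclideanSpace ℝ (Fin n) → ℝ) : ℝ :=
  sSup {t : ℝ | ∃ x y : EuclideanSpace ℝ (Fin n), x ≠ y ∧ t = |b x - b y| / dist x y ^ β}

noncomputable def bavg (n : ℕ) (b : EuclideanSpace ℝ (Fin n) → ℝ)
    (c : EuclideanSpace ℝ (Fin n)) (r : ℝ) : ℝ :=
  (volume (ball c r)).toReal⁻¹ * ∫ x in ball c r, b x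

section Averages

variable {α : Type*} [MeasurableSpace α] {μ : Measure α} {s : Set α} {f : α → ℝ} {a K : ℝ}

theorem abs_inv_mul_setIntegral_le (hs₀ : μ s ≠ 0) (hs : μ s < ⊤)
    (hK : ∀ x ∈ s, |f x| ≤ K) : |(μ s).toReal⁻¹ * ∫ x in s, f x ∂μ| ≤ K := by
  have hV : 0 < (μ s).toReal := ENNReal.toReal_pos hs₀ hs.ne
  have := norm_setIntegral_le_of_norm_le_const (f := f) hs hK
  rw [Real.norm_eq_abs, Measure.real] at this
  rw [abs_mul, abs_inv, abs_of_pos hV, inv_mul_le_iff₀ hV, mul_comm]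
  exact this

theorem abs_inv_mul_setIntegral_sub_le (hs₀ : μ s ≠ 0) (hs : μ s < ⊤) (hf : IntegrableOn f s μ)
    (hK : ∀ x ∈ s, |f x - a| ≤ K) : |(μ s).toReal⁻¹ * ∫ x in s, f x ∂μ - a| ≤ K := by
  have hV : (μ s).toReal ≠ 0 := (ENNReal.toReal_pos hs₀ hs.ne).ne'
  have hsub : (μ s).toReal⁻¹ * ∫ x in s, f x ∂μ - a = (μ s).toReal⁻¹ * ∫ x in s, (f x - a) ∂μ := by
    rw [integral_sub hf (integrableOn_const hs.ne), setIntegral_const, smul_eq_mul, Measure.real]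
    field_simp
  rw [hsub]
  exact abs_inv_mul_setIntegral_le hs₀ hs hK

end Averages

theorem abs_sub_csSup_le {S : Set ℝ} {a K : ℝ} (hS : S.Nonempty) (hK : ∀ t ∈ S, |t - a| ≤ K) :
    |a - sSup S| ≤ K := by
  have hle : ∀ t ∈ S, t ≤ a + K := fun t ht => by linarith [(abs_le.1 (hK t ht)).2]
  obtain ⟨t, ht⟩ := hS
  have hlow : a - K ≤ sSup S := by
    linarith [(abs_le.1 (hK t ht)).1, le_csSup ⟨a + K, hle⟩ ht]
  have hup : sSup S ≤ a + K := csSup_le ⟨t, ht⟩ hle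
  rw [abs_le]
  constructor <;> linarith

theorem abs_abs_sub_locFracMax_zero_le {n : ℕ} {B : Set (EuclideanSpace ℝ (Fin n))}
    {b : EuclideanSpace ℝ (Fin n) → ℝ} {x : EuclideanSpace ℝ (Fin n)} {K : ℝ}
    (hB : IsOpen B) (hx : x ∈ B) (hb : LocallyIntegrable b volume)
    (hK : ∀ y ∈ B, |b y - b x| ≤ K) : |(|b x|) - locFracMax n 0 B b x| ≤ K := by
  refine abs_sub_csSup_le ?_ ?_
  · obtain ⟨δ, hδ, hsub⟩ := Metric.isOpen_iff.1 hB x hx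
    exact ⟨_, x, δ, hδ, mem_ball_self hδ, hsub, rfl⟩
  · rintro t ⟨c, r, hr, -, hsub, rfl⟩
    rw [zero_div, zero_sub, Real.rpow_neg_one]
    refine abs_inv_mul_setIntegral_sub_le (measure_ball_pos volume c hr).ne' measure_ball_lt_top
      ((hb.integrableOn_isCompact (isCompact_closedBall c r)).mono_set ball_subset_closedBall).abs
      fun y hy => (abs_abs_sub_abs_le_abs_sub _ _).trans (hK y (hsub hy))

section Holder

variable {n : ℕ} {β : ℝ} {b : EuclideanSpace ℝ (Fin n) → ℝ}

theorem lipSemi_nonneg : 0 ≤ lipSemi n β b :=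
  Real.sSup_nonneg <| by
    rintro t ⟨x, y, -, rfl⟩
    positivity

theorem abs_sub_le_lipSemi_mul (hβ : 0 < β) (hb : ∃ L : ℝ, ∀ x y, |b x - b y| ≤ L * dist x y ^ β)
    (x y : EuclideanSpace ℝ (Fin n)) : |b x - b y| ≤ lipSemi n β b * dist x y ^ β := by
  obtain rfl | hxy := eq_or_ne x y
  · simp [Real.zero_rpow hβ.ne']
  have hd : 0 < dist x y ^ β := Real.rpow_pos_of_pos (dist_pos.2 hxy) β
  obtain ⟨L, hL⟩ := hb
  have hbdd : BddAbove {t : ℝ | ∃ x y : EuclideanSpace ℝ (Fin n), x ≠ y ∧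
      t = |b x - b y| / dist x y ^ β} := by
    refine ⟨L, ?_⟩
    rintro t ⟨x, y, hxy, rfl⟩
    exact (div_le_iff₀ (Real.rpow_pos_of_pos (dist_pos.2 hxy) β)).2 (hL x y)
  rw [← div_le_iff₀ hd]
  exact le_csSup hbdd ⟨x, y, hxy, rfl⟩

end Holder

theorem toReal_addHaar_ball_rpow_div {E : Type*} [NormedAddCommGroup E] [NormedSpace ℝ E]
    [FiniteDimensional ℝ E] [MeasurableSpace E] [BorelSpace E] (μ : Measure E)
    [μ.IsAddHaarMeasure] (hE : Module.finrank ℝ E ≠ 0) (c : E) {r : ℝ} (hr : 0 < r) (s : ℝ) :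
    (μ (ball c r)).toReal ^ (s / Module.finrank ℝ E) =
      r ^ s * (μ (ball 0 1)).toReal ^ (s / Module.finrank ℝ E) := by
  rw [Measure.addHaar_ball_of_pos μ c hr, ENNReal.toReal_mul, ENNReal.toReal_ofReal (by positivity),
    Real.mul_rpow (by positivity) ENNReal.toReal_nonneg, ← Real.rpow_natCast,
    ← Real.rpow_mul hr.le, mul_div_cancel₀ _ (Nat.cast_ne_zero.2 hE)]

theorem stmt_14_general (n : ℕ) (hn : 0 < n) (β : ℝ) (hβ0 : 0 < β)
    (b : EuclideanSpace ℝ (Fin n) → ℝ) (hb : LocallyIntegrable b volume)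
    (hlip : ∃ L : ℝ, ∀ x y, |b x - b y| ≤ L * dist x y ^ β)
    (hpos : ∀ x, 0 ≤ b x) :
    ∃ C : ℝ, 0 < C ∧ ∀ (c : EuclideanSpace ℝ (Fin n)) (r : ℝ), 0 < r →
      (volume (ball c r)).toReal ^ (-(β / (n : ℝ))) *
        ((volume (ball c r)).toReal⁻¹ *
          ∫ x in ball c r, |b x - locFracMax n 0 (ball c r) b x|) ≤
        C * lipSemi n β b := by
  set L := lipSemi n β b
  set V₁ := (volume (ball (0 : EuclideanSpace ℝ (Fin n)) 1)).toReal
  have hV₁ : 0 < V₁ :=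
    ENNReal.toReal_pos (measure_ball_pos volume _ one_pos).ne' measure_ball_lt_top.ne
  refine ⟨2 ^ β * V₁ ^ (-(β / n)), by positivity, fun c r hr => ?_⟩
  have hosc : ∀ x ∈ ball c r, ∀ y ∈ ball c r, |b y - b x| ≤ L * (2 * r) ^ β := by
    intro x hx y hy
    have hxy : dist y x ≤ 2 * r := by
      linarith [dist_triangle_right y x c, mem_ball.1 hx, mem_ball.1 hy]
    exact (abs_sub_le_lipSemi_mul hβ0 hlip y x).trans <| mul_le_mul_of_nonneg_left
      (Real.rpow_le_rpow dist_nonneg hxy hβ0.le) lipSemi_nonneg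
  have hmax : ∀ x ∈ ball c r, |b x - locFracMax n 0 (ball c r) b x| ≤ L * (2 * r) ^ β := by
    intro x hx
    simpa only [abs_of_nonneg (hpos x)] using
      abs_abs_sub_locFracMax_zero_le isOpen_ball hx hb (hosc x hx)
  have havg := (abs_inv_mul_setIntegral_le (measure_ball_pos volume c hr).ne' measure_ball_lt_top
    fun x hx => (abs_abs _).trans_le (hmax x hx)).trans' (le_abs_self _)
  have hvol : (volume (ball c r)).toReal ^ (-(β / n)) = r ^ (-β) * V₁ ^ (-(β / n)) := by
    have := toReal_addHaar_ball_rpow_div volume (by simpa using hn.ne') c hr (-β)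
    simpa only [finrank_euclideanSpace_fin, neg_div] using this
  calc _ ≤ (volume (ball c r)).toReal ^ (-(β / n)) * (L * (2 * r) ^ β) :=
        mul_le_mul_of_nonneg_left havg (by positivity)
    _ = 2 ^ β * V₁ ^ (-(β / n)) * L := by
        rw [hvol, Real.mul_rpow zero_le_two hr.le, Real.rpow_neg hr.le]
        field_simp [(Real.rpow_pos_of_pos hr β).ne']

theorem stmt_14 (n : ℕ) (hn : 0 < n) (β : ℝ) (hβ0 : 0 < β) (hβ1 : β < 1)
    (b : EuclideanSpace ℝ (Fin n) → ℝ) (hb : LocallyIntegrable b volume)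
    (hlip : ∃ L : ℝ, ∀ x y, |b x - b y| ≤ L * dist x y ^ β)
    (hpos : ∀ x, 0 ≤ b x) :
    ∃ C : ℝ, 0 < C ∧ ∀ (c : EuclideanSpace ℝ (Fin n)) (r : ℝ), 0 < r →
      (volume (ball c r)).toReal ^ (-(β / (n : ℝ))) *
        ((volume (ball c r)).toReal⁻¹ *
          ∫ x in ball c r, |b x - locFracMax n 0 (ball c r) b x|) ≤
        C * lipSemi n β b :=
  stmt_14_general n hn β hβ0 b hb hlip hpos
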